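/- A metrizable space is Stäckel-compact if and only if it is compact. -/

import Mathlib

/-!
A compact metrizable space embeds continuously into `ℕ → ℝ`, and there every nonempty compact set
has a lexicographically least element: minimise the coordinates one after another and take a point
in the intersection of the resulting decreasing sequence of nonempty compact sets. Applied to the
order dual this also gives a greatest element, so pulling back the lexicographic order proves
Stäckel-compactness.

Conversely, if a Stäckel-compact space had an infinite set without accumulation points, every
subset of it would be closed, so every nonempty subset would have a least and a greatest element.
An infinite linear order contains a strictly monotone sequence (Ramsey), whose range lacks one of
the two. Hence the space is countably compact, which for metrizable spaces means compact.
-/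

def StackelCompact (X : Type*) [TopologicalSpace X] : Prop :=
  ∃ r : X → X → Prop, IsLinearOrder X r ∧
    ∀ F : Set X, IsClosed F → F.Nonempty →
      (∃ a ∈ F, ∀ x ∈ F, r a x) ∧ (∃ b ∈ F, ∀ x ∈ F, r x b)

open Set Function

section LexMin

variable {α : Type*} [LinearOrder α]

theorem toLex_toDual_comp_lt_iff {x y : ℕ → α} :
    toLex (OrderDual.toDual ∘ x) < toLex (OrderDual.toDual ∘ y) ↔ toLex y < toLex x :=
  ⟨fun ⟨n, h, hlt⟩ => ⟨n, fun j hj => (h j hj).symm, hlt⟩,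
    fun ⟨n, h, hlt⟩ => ⟨n, fun j hj => (h j hj).symm, hlt⟩⟩

def lexMinStage (K : Set (ℕ → α)) : ℕ → Set (ℕ → α)
  | 0 => K
  | n + 1 => {x ∈ lexMinStage K n | IsMinOn (· n) (lexMinStage K n) x}

variable {K : Set (ℕ → α)}

theorem lexMinStage_succ_subset (n : ℕ) : lexMinStage K (n + 1) ⊆ lexMinStage K n :=
  sep_subset _ _

theorem mem_lexMinStage_of_eq {a x : ℕ → α} (ha : a ∈ ⋂ n, lexMinStage K n) (hx : x ∈ K) :
    ∀ n, (∀ j < n, x j = a j) → x ∈ lexMinStage K n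
  | 0, _ => hx
  | n + 1, hxa => by
    have hxn := mem_lexMinStage_of_eq ha hx n fun j hj => hxa j (by omega)
    refine ⟨hxn, fun y hy => ?_⟩
    show x n ≤ y n
    rw [hxa n n.lt_succ_self]
    exact (mem_iInter.1 ha (n + 1)).2 hy

variable [TopologicalSpace α] [OrderClosedTopology α]

theorem isCompact_lexMinStage (hK : IsCompact K) : ∀ n, IsCompact (lexMinStage K n)
  | 0 => hK
  | n + 1 => by
    have hclosed : IsClosed {x : ℕ → α | IsMinOn (· n) (lexMinStage K n) x} := by
      simp only [IsMinOn, IsMinFilter, Filter.eventually_principal, ofPred_forall]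
      exact isClosed_biInter fun y _ => isClosed_le (continuous_apply n) continuous_const
    exact (isCompact_lexMinStage hK n).inter_right hclosed

theorem lexMinStage_nonempty (hK : IsCompact K) (hne : K.Nonempty) :
    ∀ n, (lexMinStage K n).Nonempty
  | 0 => hne
  | n + 1 =>
    (isCompact_lexMinStage hK n).exists_isMinOn (lexMinStage_nonempty hK hne n)
      (continuous_apply n).continuousOn

theorem IsCompact.exists_forall_toLex_le (hK : IsCompact K) (hne : K.Nonempty) :
    ∃ a ∈ K, ∀ x ∈ K, toLex a ≤ toLex x := by
  obtain ⟨a, ha⟩ := IsCompact.nonempty_iInter_of_sequence_nonempty_isCompact_isClosed _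
    lexMinStage_succ_subset (lexMinStage_nonempty hK hne) hK
    fun n => (isCompact_lexMinStage hK n).isClosed
  refine ⟨a, mem_iInter.1 ha 0, fun x hx => not_lt.1 ?_⟩
  rintro ⟨n, hxa, hlt⟩
  exact hlt.not_ge ((mem_iInter.1 ha (n + 1)).2 (mem_lexMinStage_of_eq ha hx n hxa))

theorem IsCompact.exists_forall_le_toLex (hK : IsCompact K) (hne : K.Nonempty) :
    ∃ b ∈ K, ∀ x ∈ K, toLex x ≤ toLex b := by
  obtain ⟨b, hb, hbmin⟩ := IsCompact.exists_forall_toLex_le (α := αᵒᵈ) hK hne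
  exact ⟨b, hb, fun x hx =>
    not_lt.1 fun hlt => (hbmin x hx).not_gt (toLex_toDual_comp_lt_iff.2 hlt)⟩

end LexMin

theorem stackelCompact_of_continuous_injective {X α : Type*} [TopologicalSpace X]
    [CompactSpace X] [LinearOrder α] [TopologicalSpace α] [OrderClosedTopology α] {f : X → ℕ → α}
    (hf : Continuous f) (hinj : Injective f) : StackelCompact X := by
  refine ⟨fun x y => toLex (f x) ≤ toLex (f y),
    (toLex.injective.comp hinj).isLinearOrder_onFun (· ≤ ·), fun F hF hne => ?_⟩
  have hK : IsCompact (f '' F) := hF.isCompact.image hf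
  obtain ⟨_, ⟨a, ha, rfl⟩, hmin⟩ := hK.exists_forall_toLex_le (hne.image f)
  obtain ⟨_, ⟨b, hb, rfl⟩, hmax⟩ := hK.exists_forall_le_toLex (hne.image f)
  exact ⟨⟨a, ha, fun x hx => hmin _ (mem_image_of_mem f hx)⟩,
    ⟨b, hb, fun x hx => hmax _ (mem_image_of_mem f hx)⟩⟩

theorem Set.finite_of_forall_exists_least_greatest {α : Type*} (r : α → α → Prop)
    [IsLinearOrder α r] {B : Set α}
    (hmin : ∀ C ⊆ B, C.Nonempty → ∃ a ∈ C, ∀ x ∈ C, r a x)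
    (hmax : ∀ C ⊆ B, C.Nonempty → ∃ b ∈ C, ∀ x ∈ C, r x b) : B.Finite := by
  refine not_infinite.1 fun hB => ?_
  set e : ℕ ↪ B := hB.natEmbedding B
  set u : ℕ → α := fun n => e n
  have hu : Injective u := Subtype.val_injective.comp e.injective
  have hrange : ∀ g : ℕ → ℕ, range (u ∘ g) ⊆ B := by
    rintro g _ ⟨n, rfl⟩
    exact (e (g n)).2
  obtain ⟨g, hg | hg⟩ := exists_increasing_or_nonincreasing_subseq r u
  · obtain ⟨_, ⟨m, rfl⟩, hm⟩ := hmax _ (hrange g) (range_nonempty _)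
    have := antisymm (hg m (m + 1) m.lt_succ_self) (hm _ ⟨m + 1, rfl⟩)
    exact m.succ_ne_self (g.injective (hu this)).symm
  · obtain ⟨_, ⟨m, rfl⟩, hm⟩ := hmin _ (hrange g) (range_nonempty _)
    exact hg m (m + 1) m.lt_succ_self (hm _ ⟨m + 1, rfl⟩)

theorem StackelCompact.countablyCompactSpace {X : Type*} [TopologicalSpace X] [T1Space X]
    (h : StackelCompact X) : CountablyCompactSpace X := by
  obtain ⟨r, _, hr⟩ := h
  refine isCountablyCompact_univ_iff.1
    (isCountablyCompact_iff_infinite_subset_has_accPt.2 fun B _ hB => ?_)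
  by_contra! hacc
  have hclosed : ∀ C ⊆ B, IsClosed C := fun C hC =>
    isClosed_iff_accPt.2 fun a ha => (hacc a trivial (ha.mono (Filter.principal_mono.2 hC))).elim
  exact hB (finite_of_forall_exists_least_greatest r (fun C hC hne => (hr C (hclosed C hC) hne).1)
    fun C hC hne => (hr C (hclosed C hC) hne).2)

/-- A metrizable space is Stäckel-compact if and only if it is compact. -/
theorem stackelCompact_iff_compact_of_metrizable (X : Type*) [TopologicalSpace X]
    [TopologicalSpace.MetrizableSpace X] : StackelCompact X ↔ CompactSpace X := by
  refine ⟨fun h => ?_, fun _ => ?_⟩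
  · have := h.countablyCompactSpace
    exact compactSpace_iff_seqCompactSpace.2 inferInstance
  · obtain ⟨f, hf⟩ := TopologicalSpace.exists_embedding_l_infty X
    exact stackelCompact_of_continuous_injective
      (BoundedContinuousFunction.continuous_coe.comp hf.continuous)
      (DFunLike.coe_injective.comp hf.injective)
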